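/- Algorithm correctness for the binary-search co-ranking loop: if at some point j + k = i, max(0, i-n) ≤ j_low ≤ j ≤ min(i,m), k_low ≤ k, and the unique co-rank pair (j*, k*) for i satisfies j_low ≤ j* ≤ j or k_low ≤ k* ≤ k, and the first co-rank condition is violated (j > 0, k < n, A(j-1) > B(k)), then after updating δ = ⌈(j - j_low)/2⌉, k_low' = k, j' = j - δ, k' = k + δ, the invariant j_low ≤ j* ≤ j' or k_low' ≤ k* ≤ k' still holds. -/

import Mathlib

/-!
A violation `B k < A (j - 1)` at a point `(j, k)` of the diagonal `j + k = i` pushes the co-rank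
`(j*, k*)` past `k`: if `k* ≤ k`, then `A (j* - 1) ≤ B k* ≤ B k < A (j - 1)`, so `j* < j` by
monotonicity, which on the diagonal leaves only the degenerate `j = j* = 0`, `k* = k`. Otherwise
`j* < j` and `k < k*`, so the `k`-half of the invariant is dead, and the `j`-interval `[j_low, j)`
splits at `j - δ` into a part kept in `j` and a part that reappears, mirrored, as `(k, k + δ]`.
-/

/-- Extend a function on `Fin m` to `ℕ` by `+∞` beyond its domain. -/
def extendTop {α : Type*} [LinearOrder α] {m : ℕ} (A : Fin m → α) (j : ℕ) : WithTop α :=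
  if h : j < m then ((A ⟨j, h⟩ : α) : WithTop α) else ⊤

/-- The co-rank conditions for a pair `(j,k)` with `j + k = i`. -/
def IsCoRank {α : Type*} [LinearOrder α] {m n : ℕ} (A : Fin m → α) (B : Fin n → α)
    (i j k : ℕ) : Prop :=
  j + k = i ∧ j ≤ m ∧ k ≤ n ∧
  (j = 0 ∨ extendTop A (j - 1) ≤ extendTop B k) ∧
  (k = 0 ∨ extendTop B (k - 1) < extendTop A j)

section

variable {α : Type*} [LinearOrder α] {m n : ℕ}

theorem extendTop_monotone {A : Fin m → α} (hA : Monotone A) : Monotone (extendTop A) := by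
  intro a b hab
  by_cases hb : b < m
  · simpa [extendTop, hb, hab.trans_lt hb] using hA hab
  · simp [extendTop, hb]

theorem IsCoRank.fst_le_of_lt {A : Fin m → α} {B : Fin n → α} (hA : Monotone A)
    (hB : Monotone B) {i jstar kstar k l : ℕ} (hstar : IsCoRank A B i jstar kstar)
    (hk : kstar ≤ k) (hlt : extendTop B k < extendTop A l) : jstar ≤ l := by
  by_contra! hl
  obtain h0 | hle := hstar.2.2.2.1
  · omega
  have hAl : extendTop A l ≤ extendTop A (jstar - 1) := extendTop_monotone hA (by omega)
  exact (hAl.trans (hle.trans (extendTop_monotone hB hk))).not_gt hlt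

end

theorem corank_search_invariant_general {α : Type*} [LinearOrder α] {m n : ℕ}
    (A : Fin m → α) (B : Fin n → α) (hA : Monotone A) (hB : Monotone B)
    (i jstar kstar j k jlow klow : ℕ)
    (hstar : IsCoRank A B i jstar kstar)
    (hjk : j + k = i)
    (hinv : (jlow ≤ jstar ∧ jstar ≤ j) ∨ (klow ≤ kstar ∧ kstar ≤ k))
    (hviol₃ : extendTop B k < extendTop A (j - 1)) :
    (jlow ≤ jstar ∧ jstar ≤ j - (j - jlow + 1) / 2) ∨
    (k ≤ kstar ∧ kstar ≤ k + (j - jlow + 1) / 2) := by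
  have hsum : jstar + kstar = i := hstar.1
  by_cases hk : kstar ≤ k
  · have hj : jstar ≤ j - 1 := hstar.fst_le_of_lt hA hB hk hviol₃
    omega
  · omega

theorem corank_search_invariant {α : Type*} [LinearOrder α] {m n : ℕ}
    (A : Fin m → α) (B : Fin n → α) (hA : Monotone A) (hB : Monotone B)
    (i jstar kstar j k jlow klow : ℕ)
    (hstar : IsCoRank A B i jstar kstar)
    (hjk : j + k = i) (hjlow₁ : i - n ≤ jlow) (hjlow₂ : jlow ≤ j)
    (hj : j ≤ min i m) (hklow : klow ≤ k)
    (hinv : (jlow ≤ jstar ∧ jstar ≤ j) ∨ (klow ≤ kstar ∧ kstar ≤ k))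
    (hviol₁ : 0 < j) (hviol₂ : k < n)
    (hviol₃ : extendTop B k < extendTop A (j - 1)) :
    (jlow ≤ jstar ∧ jstar ≤ j - (j - jlow + 1) / 2) ∨
    (k ≤ kstar ∧ kstar ≤ k + (j - jlow + 1) / 2) :=
  corank_search_invariant_general A B hA hB i jstar kstar j k jlow klow hstar hjk hinv hviol₃
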